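/- For every mixed graph G on n ≥ 1 vertices, ν_{2n−1}(G) ≤ 2·a(G)/n ≤ ν₁(G). -/

import Mathlib

set_option linter.unusedSectionVars false

open Matrix Finset Polynomial

variable {V : Type*} [Fintype V] [DecidableEq V]

/-- Undirected adjacency matrix of the mixed graph with edge-multiplicity function `E`:
`(u,v)`-entry `E u v` for `u ≠ v`, and `(v,v)`-entry `2 * E v v`. -/
def Au (E : V → V → ℕ) : Matrix V V ℝ :=
  Matrix.of fun u v => if u = v then ((2 * E v v : ℕ) : ℝ) else ((E u v : ℕ) : ℝ)

/-- Arc matrix of the mixed graph with arc-multiplicity function `A`. -/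
def Bm (A : V → V → ℕ) : Matrix V V ℝ := Matrix.of fun u v => ((A u v : ℕ) : ℝ)

/-- Undirected degree `d v`. -/
def dU (E : V → V → ℕ) (v : V) : ℕ :=
  (∑ u ∈ Finset.univ.filter (fun u => u ≠ v), E v u) + 2 * E v v

/-- Out-degree `d⁺ v`. -/
def dOut (A : V → V → ℕ) (v : V) : ℕ := ∑ u, A v u

/-- In-degree `d⁻ v`. -/
def dIn (A : V → V → ℕ) (v : V) : ℕ := ∑ u, A u v

/-- Integrated adjacency matrix `𝓘(G) = [[Aᵤ, B], [Bᵀ, Aᵤ]]`. -/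
def intAdj (E A : V → V → ℕ) : Matrix (V ⊕ V) (V ⊕ V) ℝ :=
  Matrix.fromBlocks (Au E) (Bm A) (Bm A)ᵀ (Au E)

/-- Integrated degree matrix `𝓘ᴰ(G)`. -/
def intDeg (E A : V → V → ℕ) : Matrix (V ⊕ V) (V ⊕ V) ℝ :=
  Matrix.diagonal (Sum.elim (fun v => ((dU E v + dOut A v : ℕ) : ℝ))
    (fun v => ((dU E v + dIn A v : ℕ) : ℝ)))

/-- Integrated Laplacian matrix `𝓘ᴸ(G) = 𝓘ᴰ(G) - 𝓘(G)`. -/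
def intLap (E A : V → V → ℕ) : Matrix (V ⊕ V) (V ⊕ V) ℝ := intDeg E A - intAdj E A

/-- Integrated signless Laplacian matrix `𝓘Q(G) = 𝓘ᴰ(G) + 𝓘(G)`. -/
def intQ (E A : V → V → ℕ) : Matrix (V ⊕ V) (V ⊕ V) ℝ := intDeg E A + intAdj E A

/-- A mixed graph is simple: multiplicities at most 1, no loops, no directed loops. -/
def IsSimple (E A : V → V → ℕ) : Prop :=
  (∀ u v, E u v ≤ 1) ∧ (∀ u v, A u v ≤ 1) ∧ (∀ v, E v v = 0) ∧ (∀ v, A v v = 0)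

/-- Number of edges (excluding loops): `e(G) = (1/2)·Σ_{u ≠ v} E u v`. -/
noncomputable def numEdges (E : V → V → ℕ) : ℝ :=
  (∑ u, ∑ v ∈ Finset.univ.filter (fun v => v ≠ u), (E u v : ℝ)) / 2

/-- Number of loops: `l(G) = Σ_v E v v`. -/
noncomputable def numLoops (E : V → V → ℕ) : ℝ := ∑ v, (E v v : ℝ)

/-- Number of arcs (including directed loops): `a(G) = Σ_{u,v} A u v`. -/
noncomputable def numArcs (A : V → V → ℕ) : ℝ := ∑ u, ∑ v, (A u v : ℝ)

lemma intAdj_isHermitian (E A : V → V → ℕ) (hE : ∀ u v, E u v = E v u) :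
    (intAdj E A).IsHermitian := by
  have hAu : (Au E)ᵀ = Au E := by
    ext u v
    by_cases h : u = v
    · subst h; rfl
    · simp [Au, Matrix.transpose_apply, h, Ne.symm h, hE u v]
  show (intAdj E A)ᴴ = intAdj E A
  rw [Matrix.conjTranspose_eq_transpose_of_trivial]
  unfold intAdj
  rw [Matrix.fromBlocks_transpose, hAu, Matrix.transpose_transpose]

lemma intLap_isHermitian (E A : V → V → ℕ) (hE : ∀ u v, E u v = E v u) :
    (intLap E A).IsHermitian :=
  (Matrix.isHermitian_diagonal _).sub (intAdj_isHermitian E A hE)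

lemma intQ_isHermitian (E A : V → V → ℕ) (hE : ∀ u v, E u v = E v u) :
    (intQ E A).IsHermitian :=
  (Matrix.isHermitian_diagonal _).add (intAdj_isHermitian E A hE)

/-- The non-increasing rearrangement of a finite tuple of reals. -/
noncomputable def sortDesc {N : ℕ} (f : Fin N → ℝ) : Fin N → ℝ :=
  fun i => (f ∘ Tuple.sort f) i.rev

/-- The eigenvalues of the integrated Laplacian matrix `𝓘ᴸ(G)`, in non-increasing order:
`nuT E A hE i` is `ν_{i+1}(G)` (0-indexed). -/
noncomputable def nuT {n : ℕ} (E A : Fin n → Fin n → ℕ) (hE : ∀ u v, E u v = E v u) :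
    Fin (n + n) → ℝ :=
  sortDesc (fun i => (intLap_isHermitian E A hE).eigenvalues (finSumFinEquiv.symm i))

/-- The eigenvalues of the integrated signless Laplacian matrix `𝓘Q(G)`, in non-increasing
order: `xiT E A hE i` is `ξ_{i+1}(G)` (0-indexed). -/
noncomputable def xiT {n : ℕ} (E A : Fin n → Fin n → ℕ) (hE : ∀ u v, E u v = E v u) :
    Fin (n + n) → ℝ :=
  sortDesc (fun i => (intQ_isHermitian E A hE).eigenvalues (finSumFinEquiv.symm i))

/-- The eigenvalues of the integrated adjacency matrix `𝓘(G)`, in non-increasing order: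
`lamT E A hE i` is `λ_{i+1}(G)` (0-indexed). -/
noncomputable def lamT {n : ℕ} (E A : Fin n → Fin n → ℕ) (hE : ∀ u v, E u v = E v u) :
    Fin (n + n) → ℝ :=
  sortDesc (fun i => (intAdj_isHermitian E A hE).eigenvalues (finSumFinEquiv.symm i))

/-!
The integrated Laplacian is the Laplacian `D - W` of the nonnegative symmetric weight matrix
`W = 𝓘(G)`: its row sums are the integrated degrees. Hence it is positive semidefinite, kills the
all-ones vector `𝟙`, and `2 xᵀ 𝓘ᴸ x = ∑ᵢⱼ Wᵢⱼ (xᵢ - xⱼ)²`. For the signing `s = (𝟙, -𝟙)` only the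
arc blocks contribute, so `sᵀ 𝓘ᴸ s = 4 a(G)`, while `‖s‖² = 2n` and `s ⊥ 𝟙`. The Rayleigh quotient
of `s` is therefore `2a/n`: it is at most `ν₁`, and by Courant–Fischer on `span {𝟙, s}` at least
`ν_{2n-1}`.
-/

namespace Matrix.IsHermitian
variable {ι : Type*} [Fintype ι] [DecidableEq ι] {M : Matrix ι ι ℝ}

noncomputable def eigenvectorCoords (hM : M.IsHermitian) (x : ι → ℝ) : ι → ℝ :=
  star (hM.eigenvectorUnitary : Matrix ι ι ℝ) *ᵥ x

lemma transpose_eigenvectorUnitary_eq_star (hM : M.IsHermitian) :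
    (hM.eigenvectorUnitary : Matrix ι ι ℝ)ᵀ = star (hM.eigenvectorUnitary : Matrix ι ι ℝ) := by
  rw [star_eq_conjTranspose, conjTranspose_eq_transpose_of_trivial]

lemma dotProduct_mulVec_eq_sum_eigenvalues (hM : M.IsHermitian) (x : ι → ℝ) :
    x ⬝ᵥ (M *ᵥ x) = ∑ i, hM.eigenvalues i * hM.eigenvectorCoords x i ^ 2 := by
  conv_lhs => rw [hM.spectral_theorem, Unitary.conjStarAlgAut_apply]
  rw [← mulVec_mulVec, ← mulVec_mulVec, dotProduct_mulVec, ← mulVec_transpose,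
    transpose_eigenvectorUnitary_eq_star]
  simp only [eigenvectorCoords, dotProduct, mulVec_diagonal, Function.comp_apply,
    RCLike.ofReal_real_eq_id, id]
  exact Finset.sum_congr rfl fun i _ => by ring

lemma dotProduct_self_eq_sum_sq (hM : M.IsHermitian) (x : ι → ℝ) :
    x ⬝ᵥ x = ∑ i, hM.eigenvectorCoords x i ^ 2 := by
  have hU := Unitary.mul_star_self_of_mem hM.eigenvectorUnitary.2
  calc x ⬝ᵥ x = hM.eigenvectorCoords x ⬝ᵥ hM.eigenvectorCoords x := by
        rw [eigenvectorCoords, dotProduct_mulVec, ← mulVec_transpose,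
          ← transpose_eigenvectorUnitary_eq_star, transpose_transpose, mulVec_mulVec,
          transpose_eigenvectorUnitary_eq_star, hU, one_mulVec]
    _ = _ := by simp only [dotProduct, sq]

lemma dotProduct_mulVec_le_of_eigenvalues_le (hM : M.IsHermitian) {c : ℝ}
    (hc : ∀ i, hM.eigenvalues i ≤ c) (x : ι → ℝ) : x ⬝ᵥ (M *ᵥ x) ≤ c * (x ⬝ᵥ x) := by
  rw [hM.dotProduct_mulVec_eq_sum_eigenvalues, hM.dotProduct_self_eq_sum_sq, Finset.mul_sum]
  gcongr with i
  exact hc i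

lemma mul_dotProduct_le_of_le_eigenvalues_of_eigenvectorCoords_eq_zero (hM : M.IsHermitian)
    {i₀ : ι} {c : ℝ} (hc : ∀ i ≠ i₀, c ≤ hM.eigenvalues i) {x : ι → ℝ}
    (hx : hM.eigenvectorCoords x i₀ = 0) : c * (x ⬝ᵥ x) ≤ x ⬝ᵥ (M *ᵥ x) := by
  rw [hM.dotProduct_mulVec_eq_sum_eigenvalues, hM.dotProduct_self_eq_sum_sq, Finset.mul_sum]
  refine Finset.sum_le_sum fun i _ => ?_
  rcases eq_or_ne i i₀ with rfl | hi
  · simp [hx]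
  · exact mul_le_mul_of_nonneg_right (hc i hi) (sq_nonneg _)

end Matrix.IsHermitian

namespace Matrix.PosSemidef
variable {ι : Type*} [Fintype ι] [DecidableEq ι] {M : Matrix ι ι ℝ}

/- Shifting `x` along the null vector `u` kills its coordinate on the bottom eigenvector, leaves
the quadratic form unchanged and only increases the norm. -/
lemma mul_dotProduct_le_of_le_eigenvalues_of_orthogonal_null (hM : M.PosSemidef) {i₀ : ι}
    {c : ℝ} (hc : ∀ i ≠ i₀, c ≤ hM.1.eigenvalues i) {u x : ι → ℝ} (hu₀ : u ≠ 0)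
    (hu : M *ᵥ u = 0) (hux : u ⬝ᵥ x = 0) : c * (x ⬝ᵥ x) ≤ x ⬝ᵥ (M *ᵥ x) := by
  have hMx : ∀ y, 0 ≤ y ⬝ᵥ (M *ᵥ y) := hM.dotProduct_mulVec_nonneg
  have hself : ∀ y : ι → ℝ, 0 ≤ y ⬝ᵥ y := dotProduct_self_star_nonneg
  rcases le_or_gt c 0 with hc₀ | hc₀
  · exact (mul_nonpos_of_nonpos_of_nonneg hc₀ (hself x)).trans (hMx x)
  set w := hM.1.eigenvectorCoords u
  have hw : w i₀ ≠ 0 := by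
    intro h
    have := hM.1.mul_dotProduct_le_of_le_eigenvalues_of_eigenvectorCoords_eq_zero hc h
    rw [hu, dotProduct_zero] at this
    exact hu₀ (dotProduct_self_eq_zero.mp
      ((nonpos_of_mul_nonpos_right this hc₀).antisymm (hself u)))
  set t := hM.1.eigenvectorCoords x i₀ / w i₀
  set y := x - t • u
  have hy : hM.1.eigenvectorCoords y i₀ = 0 := by
    change (star _ *ᵥ (x - t • u)) i₀ = 0
    rw [mulVec_sub, mulVec_smul, Pi.sub_apply, Pi.smul_apply, smul_eq_mul]
    exact sub_eq_zero.mpr (div_mul_cancel₀ _ hw).symm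
  have huM : u ᵥ* M = 0 := by
    rw [← mulVec_transpose, (isHermitian_iff_isSymm.mp hM.1).eq, hu]
  have hyM : y ⬝ᵥ (M *ᵥ y) = x ⬝ᵥ (M *ᵥ x) := by
    simp only [y, mulVec_sub, mulVec_smul, hu, smul_zero, sub_zero, sub_dotProduct,
      smul_dotProduct, dotProduct_mulVec u, huM, zero_dotProduct, smul_zero]
  have hyy : y ⬝ᵥ y = x ⬝ᵥ x + t ^ 2 * (u ⬝ᵥ u) := by
    simp only [y, sub_dotProduct, dotProduct_sub, smul_dotProduct, dotProduct_smul,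
      dotProduct_comm x u, hux, smul_eq_mul]
    ring
  calc c * (x ⬝ᵥ x) ≤ c * (y ⬝ᵥ y) := by
        rw [hyy]; gcongr; nlinarith [hself u]
    _ ≤ y ⬝ᵥ (M *ᵥ y) :=
        hM.1.mul_dotProduct_le_of_le_eigenvalues_of_eigenvectorCoords_eq_zero hc hy
    _ = x ⬝ᵥ (M *ᵥ x) := hyM

end Matrix.PosSemidef

namespace Matrix

variable {m : Type*} [Fintype m] [DecidableEq m]

noncomputable def laplacian (W : Matrix m m ℝ) : Matrix m m ℝ :=
  diagonal (fun i => ∑ j, W i j) - W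

lemma laplacian_mulVec_one (W : Matrix m m ℝ) : laplacian W *ᵥ 1 = 0 := by
  ext i
  rw [laplacian, sub_mulVec, Pi.sub_apply, mulVec_diagonal, Pi.zero_apply, sub_eq_zero]
  simp [mulVec, dotProduct]

lemma two_mul_dotProduct_laplacian_mulVec {W : Matrix m m ℝ} (hW : W.IsSymm) (x : m → ℝ) :
    2 * (x ⬝ᵥ (laplacian W *ᵥ x)) = ∑ i, ∑ j, W i j * (x i - x j) ^ 2 := by
  have hswap : ∑ i, ∑ j, W i j * x j ^ 2 = ∑ i, ∑ j, W i j * x i ^ 2 := by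
    rw [Finset.sum_comm]
    exact Finset.sum_congr rfl fun i _ => Finset.sum_congr rfl fun j _ => by rw [hW.apply i j]
  have hexpand : ∑ i, ∑ j, W i j * (x i - x j) ^ 2 = ∑ i, ∑ j, W i j * x i ^ 2
      + ∑ i, ∑ j, W i j * x j ^ 2 - 2 * ∑ i, ∑ j, x i * (W i j * x j) := by
    simp only [Finset.mul_sum, ← Finset.sum_add_distrib, ← Finset.sum_sub_distrib]
    exact Finset.sum_congr rfl fun i _ => Finset.sum_congr rfl fun j _ => by ring
  have hdiag : x ⬝ᵥ (diagonal (fun i => ∑ j, W i j) *ᵥ x) = ∑ i, ∑ j, W i j * x i ^ 2 := by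
    simp only [dotProduct, mulVec_diagonal, Finset.sum_mul, Finset.mul_sum]
    exact Finset.sum_congr rfl fun i _ => Finset.sum_congr rfl fun j _ => by ring
  have hoff : x ⬝ᵥ (W *ᵥ x) = ∑ i, ∑ j, x i * (W i j * x j) := by
    simp only [dotProduct, mulVec, Finset.mul_sum]
  rw [hexpand, hswap, laplacian, sub_mulVec, dotProduct_sub, hdiag, hoff]
  ring

lemma posSemidef_laplacian {W : Matrix m m ℝ} (hW : W.IsSymm) (hW₀ : ∀ i j, 0 ≤ W i j) :
    (laplacian W).PosSemidef := by
  refine .of_dotProduct_mulVec_nonneg ?_ fun x => ?_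
  · exact isHermitian_iff_isSymm.mpr ((isSymm_diagonal _).sub hW)
  · have h := two_mul_dotProduct_laplacian_mulVec hW x
    have : 0 ≤ ∑ i, ∑ j, W i j * (x i - x j) ^ 2 :=
      Finset.sum_nonneg fun i _ => Finset.sum_nonneg fun j _ => mul_nonneg (hW₀ i j) (sq_nonneg _)
    change 0 ≤ x ⬝ᵥ (laplacian W *ᵥ x)
    linarith

end Matrix

section MixedGraph

variable (E A : V → V → ℕ)

lemma sum_Au_apply (v : V) : ∑ u, Au E v u = dU E v := by
  rw [← Finset.sum_erase_add _ _ (Finset.mem_univ v), dU, Finset.filter_ne']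
  simp only [Au, of_apply, if_true]
  push_cast
  congr 1
  exact Finset.sum_congr rfl fun u hu => if_neg (Finset.ne_of_mem_erase hu).symm

lemma intLap_eq_laplacian : intLap E A = laplacian (intAdj E A) := by
  rw [intLap, laplacian, intDeg]
  congr 2
  ext (v | v) <;>
    simp only [Sum.elim_inl, Sum.elim_inr, intAdj, Fintype.sum_sum_type, fromBlocks_apply₁₁,
      fromBlocks_apply₁₂, fromBlocks_apply₂₁, fromBlocks_apply₂₂, sum_Au_apply, dOut, dIn, Bm,
      transpose_apply, of_apply] <;>
    push_cast <;> ring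

lemma intAdj_nonneg (i j : V ⊕ V) : 0 ≤ intAdj E A i j := by
  rcases i with u | u <;> rcases j with v | v <;>
    simp only [intAdj, fromBlocks_apply₁₁, fromBlocks_apply₁₂, fromBlocks_apply₂₁,
      fromBlocks_apply₂₂, Au, Bm, of_apply, transpose_apply] <;>
    positivity

variable {E}

lemma intLap_posSemidef (hE : ∀ u v, E u v = E v u) : (intLap E A).PosSemidef := by
  rw [intLap_eq_laplacian]
  exact posSemidef_laplacian (isHermitian_iff_isSymm.mp (intAdj_isHermitian E A hE))
    (intAdj_nonneg E A)

lemma intLap_mulVec_one : intLap E A *ᵥ 1 = 0 := by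
  rw [intLap_eq_laplacian, laplacian_mulVec_one]

lemma sign_dotProduct_intLap_mulVec_sign (hE : ∀ u v, E u v = E v u) :
    Sum.elim 1 (-1) ⬝ᵥ (intLap E A *ᵥ Sum.elim 1 (-1)) = 4 * numArcs A := by
  have h := two_mul_dotProduct_laplacian_mulVec
    (isHermitian_iff_isSymm.mp (intAdj_isHermitian E A hE)) (Sum.elim 1 (-1))
  rw [← intLap_eq_laplacian] at h
  simp only [intAdj, Bm, Fintype.sum_sum_type, Sum.elim_inl, Pi.one_apply, Sum.elim_inr,
    Pi.neg_apply, sub_neg_eq_add, fromBlocks_apply₁₁, sub_self, ne_eq, OfNat.ofNat_ne_zero,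
    not_false_eq_true, zero_pow, mul_zero, sum_const_zero, fromBlocks_apply₁₂, of_apply, zero_add,
    fromBlocks_apply₂₁, transpose_apply, fromBlocks_apply₂₂, neg_add_cancel, add_zero] at h
  rw [Finset.sum_comm (f := fun a₂ a₁ => (A a₁ a₂ : ℝ) * (-1 - 1) ^ 2)] at h
  norm_num [← Finset.sum_mul] at h
  rw [numArcs]
  linarith

end MixedGraph

section SortDesc

variable {N : ℕ}

lemma le_sortDesc_zero (f : Fin N → ℝ) (hN : 0 < N) (i : Fin N) : f i ≤ sortDesc f ⟨0, hN⟩ := by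
  have hlast : (Tuple.sort f).symm i ≤ (⟨0, hN⟩ : Fin N).rev := by
    simp only [Fin.le_def, Fin.val_rev]
    omega
  have := Tuple.monotone_sort f hlast
  rwa [Function.comp_apply, Equiv.apply_symm_apply] at this

lemma exists_forall_ne_sortDesc_le (f : Fin N → ℝ) (hN : 2 ≤ N) :
    ∃ i₀, ∀ i ≠ i₀, sortDesc f ⟨N - 2, by omega⟩ ≤ f i := by
  refine ⟨Tuple.sort f ⟨0, by omega⟩, fun i hi => ?_⟩
  have hpos : (Tuple.sort f).symm i ≠ ⟨0, by omega⟩ := fun h =>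
    hi (by rw [← h, Equiv.apply_symm_apply])
  have hsecond : (⟨N - 2, by omega⟩ : Fin N).rev ≤ (Tuple.sort f).symm i := by
    have := Fin.val_ne_of_ne hpos
    simp only [Fin.le_def, Fin.val_rev] at this ⊢
    omega
  have := Tuple.monotone_sort f hsecond
  rwa [Function.comp_apply (x := (Tuple.sort f).symm i), Equiv.apply_symm_apply] at this

end SortDesc

section IntegratedLaplacianSpectrum

variable {n : ℕ} {E : Fin n → Fin n → ℕ} (A : Fin n → Fin n → ℕ) (hE : ∀ u v, E u v = E v u)

lemma eigenvalues_le_nuT_zero (hn : 0 < n) (i : Fin n ⊕ Fin n) :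
    (intLap_isHermitian E A hE).eigenvalues i ≤ nuT E A hE ⟨0, Nat.add_pos_left hn n⟩ := by
  have h := le_sortDesc_zero
    (fun i => (intLap_isHermitian E A hE).eigenvalues (finSumFinEquiv.symm i))
    (Nat.add_pos_left hn n) (finSumFinEquiv i)
  rwa [Equiv.symm_apply_apply] at h

lemma exists_forall_ne_nuT_le (hn : 0 < n) :
    ∃ i₀, ∀ i ≠ i₀, nuT E A hE ⟨n + n - 2, Nat.sub_lt (Nat.add_pos_left hn n) two_pos⟩ ≤
      (intLap_isHermitian E A hE).eigenvalues i := by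
  obtain ⟨i₀, hi₀⟩ := exists_forall_ne_sortDesc_le
    (fun i => (intLap_isHermitian E A hE).eigenvalues (finSumFinEquiv.symm i)) (by omega)
  refine ⟨finSumFinEquiv.symm i₀, fun i hi => ?_⟩
  have h := hi₀ (finSumFinEquiv i) (by rintro rfl; simp at hi)
  rwa [Equiv.symm_apply_apply] at h

end IntegratedLaplacianSpectrum

/-- for every mixed graph `G` on `n ≥ 1` vertices,
`ν_{2n−1}(G) ≤ 2·a(G)/n ≤ ν₁(G)`. -/
theorem stmt10 (n : ℕ) (hn : 0 < n) (E A : Fin n → Fin n → ℕ)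
    (hE : ∀ u v, E u v = E v u) :
    nuT E A hE ⟨n + n - 2, by omega⟩ ≤ 2 * numArcs A / (n : ℝ) ∧
      2 * numArcs A / (n : ℝ) ≤ nuT E A hE ⟨0, by omega⟩ := by
  have hL := intLap_posSemidef A hE
  have hs := sign_dotProduct_intLap_mulVec_sign A hE
  have hss : (Sum.elim 1 (-1) : Fin n ⊕ Fin n → ℝ) ⬝ᵥ Sum.elim 1 (-1) = 2 * n := by
    simp only [dotProduct, Fintype.sum_sum_type, Sum.elim_inl, Sum.elim_inr, Pi.one_apply,
      Pi.neg_apply, mul_one, mul_neg, neg_neg, sum_const, card_univ, Fintype.card_fin, nsmul_eq_mul]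
    ring
  have hn' : (0 : ℝ) < n := by exact_mod_cast hn
  have : Nonempty (Fin n) := ⟨⟨0, hn⟩⟩
  constructor
  · obtain ⟨i₀, hi₀⟩ := exists_forall_ne_nuT_le A hE hn
    have h := hL.mul_dotProduct_le_of_le_eigenvalues_of_orthogonal_null hi₀ one_ne_zero
      (intLap_mulVec_one A) (x := Sum.elim 1 (-1)) (by simp [dotProduct, Fintype.sum_sum_type])
    rw [hs, hss] at h
    rw [le_div_iff₀ hn']
    linarith
  · have h := hL.1.dotProduct_mulVec_le_of_eigenvalues_le (eigenvalues_le_nuT_zero A hE hn)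
      (Sum.elim 1 (-1))
    rw [hs, hss] at h
    rw [div_le_iff₀ hn']
    linarith
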